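/- Define ρ(X,Y) = 2 + ln(1 + d̂(X,Y)) when 0 < d̂(X,Y) < ∞, and ρ(X,Y) = 0 when d̂(X,Y) = 0. Then for all metric spaces X, Y, Z with 0 < d̂(X,Y) < ∞ and 0 < d̂(Y,Z) < ∞, one has ρ(X,Z) ≤ ρ(X,Y) + ρ(Y,Z) (where the left-hand side is interpreted as 0 if d̂(X,Z) = 0). -/

import Mathlib

open ENNReal

/-- `f` is an `(A,B)`-quasi-isometric embedding. -/
def QIEmb {X Y : Type*} [MetricSpace X] [MetricSpace Y] (A B : ℝ) (f : X → Y) : Prop :=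
  ∀ x x' : X, (1 / A) * dist x x' - B ≤ dist (f x) (f x') ∧
    dist (f x) (f x') ≤ A * dist x x' + B

/-- `X` and `Y` are `(A,B,C)`-quasi-isometric. -/
def QuasiIsometric (X Y : Type*) [MetricSpace X] [MetricSpace Y] (A B C : ℝ) : Prop :=
  ∃ (f : X → Y) (g : Y → X), QIEmb A B f ∧ QIEmb A B g ∧
    (∀ x : X, dist (g (f x)) x ≤ C) ∧ (∀ y : Y, dist (f (g y)) y ≤ C)

/-- The quasi-isometric distance `d̂`. -/
noncomputable def qiDist (X Y : Type*) [MetricSpace X] [MetricSpace Y] : ℝ≥0∞ :=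
  sInf {e : ℝ≥0∞ | ∃ r : ℝ, 0 < r ∧ e = ENNReal.ofReal r ∧ QuasiIsometric X Y (1 + r) r r}

/-- The function ρ = 2 + ln(1 + d̂) (set to 0 when d̂ = 0, and ∞ when d̂ = ∞). -/
noncomputable def rho (e : ℝ≥0∞) : ℝ≥0∞ :=
  if e = 0 then 0 else if e = ⊤ then ⊤ else ENNReal.ofReal (2 + Real.log (1 + e.toReal))

lemma qiemb_mono {X Y : Type*} [MetricSpace X] [MetricSpace Y] {A B A' B' : ℝ}
    (hA : 1 ≤ A) (hAA : A ≤ A') (hBB : B ≤ B') {f : X → Y}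
    (h : QIEmb A B f) : QIEmb A' B' f := by
  intro x x'
  obtain ⟨h1, h2⟩ := h x x'
  have hA0 : (0:ℝ) < A := lt_of_lt_of_le one_pos hA
  have hA'0 : (0:ℝ) < A' := lt_of_lt_of_le hA0 hAA
  constructor
  · have : (1/A') * dist x x' ≤ (1/A) * dist x x' := by
      apply mul_le_mul_of_nonneg_right _ dist_nonneg
      exact one_div_le_one_div_of_le hA0 hAA
    linarith
  · have : A * dist x x' ≤ A' * dist x x' :=
      mul_le_mul_of_nonneg_right hAA dist_nonneg
    linarith

lemma qiemb_comp {X Y Z : Type*} [MetricSpace X] [MetricSpace Y] [MetricSpace Z]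
    {A B A' B' : ℝ} (hA : 1 ≤ A) (hA' : 1 ≤ A') (hB : 0 ≤ B)
    {f : X → Y} {g : Y → Z} (hf : QIEmb A B f) (hg : QIEmb A' B' g) :
    QIEmb (A*A') (A'*B + B') (g ∘ f) := by
  intro x x'
  obtain ⟨hf1, hf2⟩ := hf x x'
  obtain ⟨hg1, hg2⟩ := hg (f x) (f x')
  have hA0 : (0:ℝ) < A := by linarith
  have hA'0 : (0:ℝ) < A' := by linarith
  simp only [Function.comp]
  constructor
  · have h1 : (1/A') * ((1/A) * dist x x' - B) ≤ (1/A') * dist (f x) (f x') :=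
      mul_le_mul_of_nonneg_left hf1 (by positivity)
    have h2 : (1/A') * B ≤ A' * B := by
      apply mul_le_mul_of_nonneg_right _ hB
      calc 1/A' ≤ 1 := by rw [div_le_one hA'0]; exact hA'
        _ ≤ A' := hA'
    have e : (1/(A*A')) * dist x x' = (1/A') * ((1/A) * dist x x') := by
      field_simp
    nlinarith [hg1]
  · have h1 : A' * dist (f x) (f x') ≤ A' * (A * dist x x' + B) :=
      mul_le_mul_of_nonneg_left hf2 (le_of_lt hA'0)
    nlinarith [hg2]

lemma qi_key {X Y Z : Type*} [MetricSpace X] [MetricSpace Y] [MetricSpace Z]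
    {r s : ℝ} (hr : 0 < r) (hs : 0 < s)
    (h1 : QuasiIsometric X Y (1+r) r r) (h2 : QuasiIsometric Y Z (1+s) s s) :
    QuasiIsometric X Z (1 + 2*(r+s+r*s)) (2*(r+s+r*s)) (2*(r+s+r*s)) := by
  obtain ⟨f, g, hf, hg, hgf, hfg⟩ := h1
  obtain ⟨f', g', hf', hg', hg'f', hf'g'⟩ := h2
  refine ⟨f' ∘ f, g ∘ g', ?_, ?_, ?_, ?_⟩
  · have := qiemb_comp (by linarith) (by linarith) hr.le hf hf'
    exact qiemb_mono (by nlinarith) (by nlinarith) (by nlinarith) this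
  · have := qiemb_comp (by linarith) (by linarith) hs.le hg' hg
    exact qiemb_mono (by nlinarith) (by nlinarith) (by nlinarith) this
  · intro x
    have h3 : dist (g (g' (f' (f x)))) (g (f x)) ≤ (1+r) * dist (g' (f' (f x))) (f x) + r :=
      (hg _ _).2
    have h4 := hg'f' (f x)
    have h5 := hgf x
    have h7 := dist_triangle (g (g' (f' (f x)))) (g (f x)) x
    have h6 : (1+r) * dist (g' (f' (f x))) (f x) ≤ (1+r) * s :=
      mul_le_mul_of_nonneg_left h4 (by linarith)
    simp only [Function.comp]
    nlinarith
  · intro z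
    have h3 : dist (f' (f (g (g' z)))) (f' (g' z)) ≤ (1+s) * dist (f (g (g' z))) (g' z) + s :=
      (hf' _ _).2
    have h4 := hfg (g' z)
    have h5 := hf'g' z
    have h7 := dist_triangle (f' (f (g (g' z)))) (f' (g' z)) z
    have h6 : (1+s) * dist (f (g (g' z))) (g' z) ≤ (1+s) * r :=
      mul_le_mul_of_nonneg_left h4 (by linarith)
    simp only [Function.comp]
    nlinarith

lemma qiDist_exists (X Y : Type*) [MetricSpace X] [MetricSpace Y]
    (hfin : qiDist X Y < ⊤) {ε : ℝ} (hε : 0 < ε) :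
    ∃ r : ℝ, 0 < r ∧ r ≤ (qiDist X Y).toReal + ε ∧ QuasiIsometric X Y (1+r) r r := by
  have hlt : qiDist X Y < qiDist X Y + ENNReal.ofReal ε :=
    ENNReal.lt_add_right hfin.ne (ENNReal.ofReal_pos.mpr hε).ne'
  rw [qiDist] at hlt
  obtain ⟨e, ⟨r, hr, rfl, hQI⟩, hlt'⟩ := sInf_lt_iff.mp (show sInf _ < _ from hlt)
  refine ⟨r, hr, ?_, hQI⟩
  have hlt'' : ENNReal.ofReal r < qiDist X Y + ENNReal.ofReal ε := hlt'
  have := ENNReal.toReal_mono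
    (ENNReal.add_ne_top.mpr ⟨hfin.ne, ENNReal.ofReal_ne_top⟩) hlt''.le
  rwa [ENNReal.toReal_ofReal hr.le, ENNReal.toReal_add hfin.ne ENNReal.ofReal_ne_top,
    ENNReal.toReal_ofReal hε.le] at this

/-- ρ satisfies the triangle inequality on spaces at positive finite
quasi-isometric distance. -/
theorem rho_triangle
    (X Y Z : Type*) [MetricSpace X] [MetricSpace Y] [MetricSpace Z]
    (hXY0 : 0 < qiDist X Y) (hXYfin : qiDist X Y < ⊤)
    (hYZ0 : 0 < qiDist Y Z) (hYZfin : qiDist Y Z < ⊤) :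
    rho (qiDist X Z) ≤ rho (qiDist X Y) + rho (qiDist Y Z) := by
  set a := (qiDist X Y).toReal with ha
  set b := (qiDist Y Z).toReal with hb
  have ha0 : 0 ≤ a := ENNReal.toReal_nonneg
  have hb0 : 0 ≤ b := ENNReal.toReal_nonneg
  have key : ∀ ε : ℝ, 0 < ε → ∃ r s : ℝ, 0 < r ∧ 0 < s ∧ r ≤ a + ε ∧ s ≤ b + ε ∧
      qiDist X Z ≤ ENNReal.ofReal (2*(r+s+r*s)) := by
    intro ε hε
    obtain ⟨r, hr, hra, hQIr⟩ := qiDist_exists X Y hXYfin hε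
    obtain ⟨s, hs, hsb, hQIs⟩ := qiDist_exists Y Z hYZfin hε
    exact ⟨r, s, hr, hs, hra, hsb,
      sInf_le ⟨2*(r+s+r*s), by nlinarith, rfl, qi_key hr hs hQIr hQIs⟩⟩
  have hXZfin : qiDist X Z < ⊤ := by
    obtain ⟨r, s, _, _, _, _, hle⟩ := key 1 one_pos
    exact lt_of_le_of_lt hle ENNReal.ofReal_lt_top
  set c := (qiDist X Z).toReal with hc
  have hc0 : 0 ≤ c := ENNReal.toReal_nonneg
  have hcbound : c ≤ 2*(a+b+a*b) := by
    apply _root_.le_of_forall_pos_le_add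
    intro ε hε
    have hd : (0:ℝ) < 2*(3+a+b) := by nlinarith
    set ε' := min 1 (ε / (2*(3+a+b))) with hε'
    have hε'0 : 0 < ε' := lt_min one_pos (by positivity)
    have hε'1 : ε' ≤ 1 := min_le_left _ _
    have hε'2 : ε' ≤ ε / (2*(3+a+b)) := min_le_right _ _
    obtain ⟨r, s, hr, hs, hra, hsb, hle⟩ := key ε' hε'0
    have hcr : c ≤ 2*(r+s+r*s) := by
      rw [hc]
      exact ENNReal.toReal_le_of_le_ofReal (by nlinarith) hle
    have hεd : ε' * (2*(3+a+b)) ≤ ε := by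
      rw [le_div_iff₀ hd] at hε'2; linarith
    nlinarith
  by_cases h0 : qiDist X Z = 0
  · simp [rho, h0]
  · have la : 0 ≤ Real.log (1+a) := Real.log_nonneg (by linarith)
    have lb : 0 ≤ Real.log (1+b) := Real.log_nonneg (by linarith)
    have L : rho (qiDist X Z) = ENNReal.ofReal (2 + Real.log (1+c)) := by
      rw [rho, if_neg h0, if_neg hXZfin.ne]
    have RY : rho (qiDist X Y) = ENNReal.ofReal (2 + Real.log (1+a)) := by
      rw [rho, if_neg hXY0.ne', if_neg hXYfin.ne]
    have RZ : rho (qiDist Y Z) = ENNReal.ofReal (2 + Real.log (1+b)) := by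
      rw [rho, if_neg hYZ0.ne', if_neg hYZfin.ne]
    rw [L, RY, RZ, ← ENNReal.ofReal_add (by linarith) (by linarith)]
    apply ENNReal.ofReal_le_ofReal
    have hlog2 : Real.log 2 ≤ 1 := by
      have := Real.log_le_sub_one_of_pos (by norm_num : (0:ℝ) < 2); linarith
    have h1 : Real.log (1+c) ≤ Real.log (2*((1+a)*(1+b))) := by
      apply Real.log_le_log (by linarith) (by nlinarith)
    rw [Real.log_mul (by norm_num) (by positivity),
      Real.log_mul (by positivity) (by positivity)] at h1
    linarith
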